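/- Let Φ be an MNPF with closeness parameter κ for a Markov game with state set S. If π* is an ε-approximate maximizer of Φ in every state, i.e., Φ(s,π*) ≥ sup_{π∈Π} Φ(s,π) − ε for all s ∈ S, then π* is a (κ√(2|S|) + ε)-stationary Nash equilibrium: for every player i and every policy π_i, V_i(μ, π*_i, π*_{-i}) ≥ V_i(μ, π_i, π*_{-i}) − (κ√(2|S|) + ε). -/

import Mathlib

/-!
Unilaterally replacing `π*ᵢ` by `πᵢ` changes `Vᵢ(s, ·)` by at most the change of `Φ(s, ·)`,
which is `≤ ε` by approximate maximality, plus `κ` times the distance between the two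
policies. Each simplex has squared Euclidean diameter at most `2`, so that distance is at most
`√(2|S|)`. Averaging the per-state bound over `μ` gives the claim.
-/

open Finset

theorem sum_sub_sq_le_two_of_mem_stdSimplex {ι : Type*} [Fintype ι] {x y : ι → ℝ}
    (hx : x ∈ stdSimplex ℝ ι) (hy : y ∈ stdSimplex ℝ ι) :
    ∑ a, (x a - y a) ^ 2 ≤ 2 :=
  calc ∑ a, (x a - y a) ^ 2
      ≤ ∑ a, (x a + y a) := sum_le_sum fun a _ => by
        obtain ⟨hx0, hx1⟩ := mem_Icc_of_mem_stdSimplex hx a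
        obtain ⟨hy0, hy1⟩ := mem_Icc_of_mem_stdSimplex hy a
        nlinarith
    _ = 2 := by rw [sum_add_distrib, hx.2, hy.2]; norm_num

theorem sum_sum_sub_sq_le_of_mem_stdSimplex {S ι : Type*} [Fintype S] [Fintype ι]
    {x y : S → ι → ℝ} (hx : ∀ s, x s ∈ stdSimplex ℝ ι) (hy : ∀ s, y s ∈ stdSimplex ℝ ι) :
    ∑ s, ∑ a, (x s a - y s a) ^ 2 ≤ 2 * Fintype.card S :=
  calc ∑ s, ∑ a, (x s a - y s a) ^ 2
      ≤ ∑ _s : S, (2 : ℝ) := sum_le_sum fun s _ => sum_sub_sq_le_two_of_mem_stdSimplex (hx s) (hy s)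
    _ = 2 * Fintype.card S := by rw [sum_const, card_univ, nsmul_eq_mul, mul_comm]

theorem sum_mul_le_of_mem_stdSimplex {S : Type*} [Fintype S] {μ f : S → ℝ} {c : ℝ}
    (hμ : μ ∈ stdSimplex ℝ S) (hf : ∀ s, f s ≤ c) :
    ∑ s, μ s * f s ≤ c :=
  calc ∑ s, μ s * f s
      ≤ ∑ s, μ s * c := sum_le_sum fun s _ => mul_le_mul_of_nonneg_left (hf s) (hμ.1 s)
    _ = c := by rw [← sum_mul, hμ.2, one_mul]

theorem mnpf_approx_maximizer_is_approx_NE_general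
    {S I : Type} [Fintype S] [DecidableEq I]
    {A : I → Type} [∀ i, Fintype (A i)]
    (κ ε : ℝ) (hκ : 0 ≤ κ)
    (μ : S → ℝ) (hμ0 : ∀ s, 0 ≤ μ s) (hμ1 : ∑ s, μ s = 1)
    (Vs : I → (∀ i, S → A i → ℝ) → S → ℝ)
    (Vμ : I → (∀ i, S → A i → ℝ) → ℝ)
    (hVμ : ∀ i π, Vμ i π = ∑ s, μ s * Vs i π s)
    (Φ : S → (∀ i, S → A i → ℝ) → ℝ)
    (hMNPF : ∀ (π : ∀ i, S → A i → ℝ) (i : I) (πi' : S → A i → ℝ) (s : S),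
      (∀ j s', (∀ a, 0 ≤ π j s' a) ∧ ∑ a, π j s' a = 1) →
      (∀ s', (∀ a, 0 ≤ πi' s' a) ∧ ∑ a, πi' s' a = 1) →
      |(Φ s (Function.update π i πi') - Φ s π) -
          (Vs i (Function.update π i πi') s - Vs i π s)| ≤
        κ * Real.sqrt (∑ s', ∑ a, (πi' s' a - π i s' a) ^ 2))
    (πstar : ∀ i, S → A i → ℝ)
    (hπstar : ∀ j s, (∀ a, 0 ≤ πstar j s a) ∧ ∑ a, πstar j s a = 1)
    (hmax : ∀ π : ∀ i, S → A i → ℝ,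
      (∀ j s, (∀ a, 0 ≤ π j s a) ∧ ∑ a, π j s a = 1) →
      ∀ s, Φ s πstar ≥ Φ s π - ε) :
    ∀ (i : I) (πi : S → A i → ℝ),
      (∀ s, (∀ a, 0 ≤ πi s a) ∧ ∑ a, πi s a = 1) →
      Vμ i πstar ≥ Vμ i (Function.update πstar i πi) -
        (κ * Real.sqrt (2 * Fintype.card S) + ε) := by
  intro i πi hπi
  have hupdate : ∀ j s, (∀ a, 0 ≤ Function.update πstar i πi j s a) ∧
      ∑ a, Function.update πstar i πi j s a = 1 :=
    (Function.forall_update_iff πstar fun j πj => ∀ s, πj s ∈ stdSimplex ℝ (A j)).2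
      ⟨hπi, fun j _ => hπstar j⟩
  have hdist : κ * Real.sqrt (∑ s, ∑ a, (πi s a - πstar i s a) ^ 2) ≤
      κ * Real.sqrt (2 * Fintype.card S) :=
    mul_le_mul_of_nonneg_left
      (Real.sqrt_le_sqrt (sum_sum_sub_sq_le_of_mem_stdSimplex hπi (hπstar i))) hκ
  have hstate : ∀ s, Vs i (Function.update πstar i πi) s - Vs i πstar s ≤
      κ * Real.sqrt (2 * Fintype.card S) + ε := fun s => by
    have hclose := (abs_le.mp (hMNPF πstar i πi s hπstar hπi)).1
    have hopt := hmax _ hupdate s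
    linarith
  have havg := sum_mul_le_of_mem_stdSimplex ⟨hμ0, hμ1⟩ hstate
  simp only [mul_sub, sum_sub_distrib] at havg
  rw [hVμ, hVμ]
  linarith

/-- If `Φ` is an MNPF with closeness parameter `κ` and `π*` is an
`ε`-approximate maximizer of `Φ(s,·)` in every state `s`, then `π*` is a
`(κ√(2|S|) + ε)`-stationary Nash equilibrium. -/
theorem mnpf_approx_maximizer_is_approx_NE
    {S I : Type} [Fintype S] [Fintype I] [DecidableEq I]
    {A : I → Type} [∀ i, Fintype (A i)]
    (κ ε : ℝ) (hκ : 0 ≤ κ) (hε : 0 ≤ ε)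
    (μ : S → ℝ) (hμ0 : ∀ s, 0 ≤ μ s) (hμ1 : ∑ s, μ s = 1)
    (Vs : I → (∀ i, S → A i → ℝ) → S → ℝ)
    (Vμ : I → (∀ i, S → A i → ℝ) → ℝ)
    (hVμ : ∀ i π, Vμ i π = ∑ s, μ s * Vs i π s)
    (Φ : S → (∀ i, S → A i → ℝ) → ℝ)
    (hMNPF : ∀ (π : ∀ i, S → A i → ℝ) (i : I) (πi' : S → A i → ℝ) (s : S),
      (∀ j s', (∀ a, 0 ≤ π j s' a) ∧ ∑ a, π j s' a = 1) →
      (∀ s', (∀ a, 0 ≤ πi' s' a) ∧ ∑ a, πi' s' a = 1) →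
      |(Φ s (Function.update π i πi') - Φ s π) -
          (Vs i (Function.update π i πi') s - Vs i π s)| ≤
        κ * Real.sqrt (∑ s', ∑ a, (πi' s' a - π i s' a) ^ 2))
    (πstar : ∀ i, S → A i → ℝ)
    (hπstar : ∀ j s, (∀ a, 0 ≤ πstar j s a) ∧ ∑ a, πstar j s a = 1)
    (hmax : ∀ π : ∀ i, S → A i → ℝ,
      (∀ j s, (∀ a, 0 ≤ π j s a) ∧ ∑ a, π j s a = 1) →
      ∀ s, Φ s πstar ≥ Φ s π - ε) :
    ∀ (i : I) (πi : S → A i → ℝ),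
      (∀ s, (∀ a, 0 ≤ πi s a) ∧ ∑ a, πi s a = 1) →
      Vμ i πstar ≥ Vμ i (Function.update πstar i πi) -
        (κ * Real.sqrt (2 * Fintype.card S) + ε) :=
  mnpf_approx_maximizer_is_approx_NE_general κ ε hκ μ hμ0 hμ1 Vs Vμ hVμ Φ hMNPF πstar hπstar hmax
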